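/- arXiv:1512.05043 — 3 statements merged into one kernel-verified Lean document; each statement's English description precedes it below -/
import Mathlib

section
/- Suppose ℓ and ℓ⋆ are integers with 0 ≤ ℓ, ℓ⋆ ≤ q^d − 2, and Q, Q⋆ ∈ A[X] are polynomials of degree at most q^d − 2 such that Q(λ_℘) and Q⋆(λ_℘) are units of O_℘ and (λ_℘/C_𝔤(λ_℘))^ℓ · (Q(λ_℘)/Q(C_𝔤(λ_℘))) = (λ_℘/C_𝔤(λ_℘))^{ℓ⋆} · (Q⋆(λ_℘)/Q⋆(C_𝔤(λ_℘))). Then ℓ = ℓ⋆ and Q⋆ = υ·Q for some υ ∈ 𝔽_q^×. -/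
/-!
The element `z = λ^ℓ Q(λ) / (λ^ℓ⋆ Q⋆(λ))` is fixed by `σ_𝔤`, and `σ_𝔤` generates
`Gal(𝕂_℘/k)` because `𝔤` is a primitive root modulo `℘`; hence `z = c ∈ k`. Taking norms,
`N(λ) = ±℘` while `N(Q(λ))` and `N(Q⋆(λ))` are units of `A` (they are norms of units of `O_℘`), so
`c^(q^d-1) = ℘^(ℓ-ℓ⋆) · unit`. As `|ℓ - ℓ⋆| < q^d - 1` and `A` is integrally closed, this forces
`ℓ = ℓ⋆` and `c ∈ A^× = 𝔽_q^×`. Finally `Q - c Q⋆` vanishes at `λ` and has degree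
`< q^d - 1 = deg Ψ_℘`, so it is zero.
-/

/-- `x` is a unit of the subalgebra `S`. -/
def IsUnitIn {R K : Type*} [CommSemiring R] [CommRing K] [Algebra R K]
    (S : Subalgebra R K) (x : K) : Prop :=
  x ∈ S ∧ ∃ y ∈ S, x * y = 1

open Polynomial Module

theorem Nat.pow_pred_lt_pow_sub_one {q d : ℕ} (hq : 2 ≤ q) (hd : 1 ≤ d) (h : 2 < q ∨ 1 < d) :
    q ^ (d - 1) < q ^ d - 1 := by
  obtain ⟨e, rfl⟩ := Nat.exists_eq_add_of_le hd
  rw [Nat.add_sub_cancel_left, pow_add, pow_one]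
  have hm : 1 ≤ q ^ e := Nat.one_le_pow _ _ (by omega)
  have hqm : q ^ e + 2 ≤ q * q ^ e := by
    rcases h with h | h
    · nlinarith
    · have : q ≤ q ^ e := Nat.le_self_pow (by omega) q
      nlinarith
  omega

section PrimitiveRoot

variable {G₀ : Type*} [GroupWithZero G₀] [Finite G₀] {x : G₀}

theorem ne_zero_of_forall_exists_pow_eq (hx : ∀ u : G₀ˣ, ∃ n : ℕ, x ^ n = u)
    (hcard : 2 < Nat.card G₀) : x ≠ 0 := by
  rintro rfl
  have : Nontrivial G₀ˣ := Finite.one_lt_card_iff_nontrivial.mp (by rw [Nat.card_units]; omega)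
  obtain ⟨u, hu⟩ := exists_ne (1 : G₀ˣ)
  obtain ⟨n, hn⟩ := hx u
  rcases n with _ | n
  · exact hu (Units.ext (by rw [← hn, pow_zero, Units.val_one]))
  · exact u.ne_zero (by rw [← hn, zero_pow n.succ_ne_zero])

theorem orderOf_eq_card_sub_one_of_forall_exists_pow_eq (hx : ∀ u : G₀ˣ, ∃ n : ℕ, x ^ n = u)
    (hcard : 2 < Nat.card G₀) : orderOf x = Nat.card G₀ - 1 := by
  have hx0 := ne_zero_of_forall_exists_pow_eq hx hcard
  rw [← Units.val_mk0 hx0, orderOf_units, orderOf_eq_card_of_forall_mem_zpowers, Nat.card_units]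
  intro u
  obtain ⟨n, hn⟩ := hx u
  exact ⟨n, Units.ext (by simp [hn])⟩

end PrimitiveRoot

namespace Polynomial

theorem coeff_one_eq_eval_derivative {R : Type*} [Semiring R] (p : R[X]) :
    p.coeff 1 = (derivative p).eval 0 := by
  simp [← coeff_zero_eq_eval_zero, coeff_derivative]

theorem coeff_one_comp {R : Type*} [CommSemiring R] (p : R[X]) {q : R[X]}
    (hq : q.coeff 0 = 0) : (p.comp q).coeff 1 = p.coeff 1 * q.coeff 1 := by
  rw [coeff_one_eq_eval_derivative, coeff_one_eq_eval_derivative, coeff_one_eq_eval_derivative,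
    derivative_comp, eval_mul, eval_comp, ← coeff_zero_eq_eval_zero q, hq, mul_comm]

theorem natCard_quotient_span {F : Type*} [Field F] {p : F[X]} (hp : p ≠ 0) :
    Nat.card (F[X] ⧸ Ideal.span {p}) = Nat.card F ^ p.natDegree := by
  have : Module.Finite F (F[X] ⧸ Ideal.span {p}) := (AdjoinRoot.powerBasis hp).finite
  rw [Module.natCard_eq_pow_finrank (K := F), finrank_quotient_span_eq_natDegree]

theorem aeval_algEquiv_apply {R K L : Type*} [CommSemiring R] [CommSemiring K] [Semiring L]
    [Algebra R K] [Algebra K L] [Algebra R L] [IsScalarTower R K L] (σ : L ≃ₐ[K] L) (x : L)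
    (f : R[X]) : aeval (σ x) f = σ (aeval x f) :=
  aeval_algHom_apply (σ.restrictScalars R) x f

section Minpoly

variable {R K L : Type*} [CommRing R] [Field K] [Ring L] [Algebra R K] [Algebra K L]
  [Algebra R L] [IsScalarTower R K L] [FaithfulSMul R K] {x : L}

theorem eq_zero_of_aeval_eq_zero_of_natDegree_lt {f : R[X]} (hf : aeval x f = 0)
    (hdeg : f.natDegree < (minpoly K x).natDegree) : f = 0 := by
  by_contra hf0
  have hinj := FaithfulSMul.algebraMap_injective R K
  have hle := natDegree_le_natDegree <| minpoly.degree_le_of_ne_zero K x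
    ((Polynomial.map_ne_zero_iff hinj).mpr hf0) (by rwa [aeval_map_algebraMap])
  rw [natDegree_map_eq_of_injective hinj] at hle
  omega

theorem eq_C_mul_of_aeval_eq {f g : R[X]} {r : R} (hf : f.natDegree < (minpoly K x).natDegree)
    (hg : g.natDegree < (minpoly K x).natDegree)
    (h : aeval x f = algebraMap R L r * aeval x g) : f = C r * g :=
  sub_eq_zero.mp <| eq_zero_of_aeval_eq_zero_of_natDegree_lt (K := K)
    (by rw [map_sub, map_mul, aeval_C, h, sub_self])
    ((natDegree_sub_le _ _).trans_lt (max_lt hf ((natDegree_C_mul_le _ _).trans_lt hg)))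

end Minpoly

end Polynomial

section Galois

variable {K L : Type*} [Field K] [Field L] [Algebra K L] [FiniteDimensional K L]

theorem exists_algEquiv_apply_eq {x y : L} (hx : Algebra.adjoin K {x} = ⊤)
    (hy : aeval y (minpoly K x) = 0) : ∃ σ : L ≃ₐ[K] L, σ x = y :=
  let f := (PowerBasis.ofAdjoinEqTop (.of_finite K x) hx).lift y hy
  ⟨.ofBijective f (Algebra.IsAlgebraic.algHom_bijective f), PowerBasis.lift_gen _ y hy⟩

theorem Algebra.norm_eq_coeff_zero_minpoly_of_adjoin_eq_top {x : L}
    (hx : Algebra.adjoin K {x} = ⊤) :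
    Algebra.norm K x = (-1) ^ finrank K L * (minpoly K x).coeff 0 := by
  have h := Algebra.PowerBasis.norm_gen_eq_coeff_zero_minpoly
    (PowerBasis.ofAdjoinEqTop (.of_finite K x) hx)
  rwa [← PowerBasis.finrank] at h

theorem IntermediateField.fixedField_zpowers_eq_bot {σ : L ≃ₐ[K] L}
    (hσ : orderOf σ = finrank K L) : fixedField (Subgroup.zpowers σ) = ⊥ := by
  rw [← finrank_eq_one_iff]
  have h := finrank_mul_finrank K (fixedField (Subgroup.zpowers σ)) L
  rwa [finrank_fixedField_eq_card, Nat.card_zpowers, hσ, Nat.mul_eq_right finrank_pos.ne'] at h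

theorem exists_algebraMap_eq_of_apply_eq_self {σ : L ≃ₐ[K] L} (hσ : orderOf σ = finrank K L)
    {x : L} (hx : σ x = x) : ∃ c : K, algebraMap K L c = x := by
  have hmem : x ∈ IntermediateField.fixedField (Subgroup.zpowers σ) := by
    rintro ⟨τ, hτ⟩
    obtain ⟨j, rfl⟩ := Subgroup.mem_zpowers_iff.mp hτ
    exact MulAction.mem_fixedBy_zpow (g := σ) hx j
  rw [IntermediateField.fixedField_zpowers_eq_bot hσ] at hmem
  exact IntermediateField.mem_bot.mp hmem

theorem exists_algebraMap_mul_eq_of_div_apply_eq {σ : L ≃ₐ[K] L} (hσ : orderOf σ = finrank K L)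
    {x y : L} (hy : y ≠ 0) (h : x / σ x = y / σ y) : ∃ c : K, x = algebraMap K L c * y := by
  have hσy : σ y ≠ 0 := (map_ne_zero σ).mpr hy
  rcases eq_or_ne x 0 with rfl | hx
  · exact ⟨0, by rw [map_zero, zero_mul]⟩
  have hσx : σ x ≠ 0 := (map_ne_zero σ).mpr hx
  rw [div_eq_div_iff hσx hσy] at h
  obtain ⟨c, hc⟩ := exists_algebraMap_eq_of_apply_eq_self hσ (x := x / y) (by
    rw [map_div₀, div_eq_div_iff hσy hy]
    linear_combination -h)
  exact ⟨c, by rw [hc, div_mul_cancel₀ x hy]⟩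

end Galois

section PrimePower

variable {R K : Type*} [CommRing R] [IsDomain R] [IsIntegrallyClosed R] [Field K] [Algebra R K]
  [IsFractionRing R K] {p : R}

theorem exists_isUnit_algebraMap_eq_of_pow_eq (hp : Prime p) {n e : ℕ} (he : e < n) {u : R}
    (hu : IsUnit u) {c : K} (h : c ^ n = algebraMap R K (u * p ^ e)) :
    e = 0 ∧ ∃ r : R, IsUnit r ∧ algebraMap R K r = c := by
  have hn : 0 < n := by omega
  obtain ⟨r, rfl⟩ : ∃ r : R, algebraMap R K r = c := IsIntegrallyClosed.isIntegral_iff.mp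
    (IsIntegral.of_pow hn (h ▸ isIntegral_algebraMap))
  have hr : r ^ n = u * p ^ e := IsFractionRing.injective R K (by rw [map_pow, h])
  have he0 : e = 0 := by
    by_contra he0
    have hpr : p ∣ r := hp.dvd_of_dvd_pow (hr ▸ (dvd_pow_self p he0).mul_left u)
    have hpn : p ^ n ∣ p ^ e := hu.dvd_mul_left.mp (hr ▸ pow_dvd_pow_of_dvd hpr n)
    exact absurd ((pow_dvd_pow_iff hp.ne_zero hp.not_isUnit).mp hpn) (by omega)
  subst he0
  rw [pow_zero, mul_one] at hr
  exact ⟨rfl, r, (isUnit_pow_iff hn.ne').mp (hr ▸ hu), rfl⟩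

theorem eq_and_exists_isUnit_algebraMap_eq_of_mul_prime_pow_eq (hp : Prime p) {n i j : ℕ} (hi : i < n)
    (hj : j < n) {a b : R} (ha : IsUnit a) (hb : IsUnit b) {c : K}
    (h : algebraMap R K (a * p ^ i) = c ^ n * algebraMap R K (b * p ^ j)) :
    i = j ∧ ∃ r : R, IsUnit r ∧ algebraMap R K r = c := by
  have hne : ∀ {u : R} (k : ℕ), IsUnit u → algebraMap R K (u * p ^ k) ≠ 0 := fun k hu =>
    (map_ne_zero_iff _ (IsFractionRing.injective R K)).mpr
      (mul_ne_zero hu.ne_zero (pow_ne_zero k hp.ne_zero))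
  wlog hji : j ≤ i generalizing i j a b c
  · have hc : c ≠ 0 := by rintro rfl; exact hne i ha (by rw [h, zero_pow (by omega), zero_mul])
    obtain ⟨hji, r, hr, hrc⟩ := this hj hi hb ha (c := c⁻¹)
      (by rw [h, inv_pow, inv_mul_cancel_left₀ (pow_ne_zero n hc)]) (by omega)
    refine ⟨hji.symm, ↑hr.unit⁻¹, hr.unit⁻¹.isUnit, ?_⟩
    rw [← inv_inv c, ← hrc]
    exact eq_inv_of_mul_eq_one_left (by rw [← map_mul, IsUnit.val_inv_mul, map_one])
  obtain ⟨e, rfl⟩ := Nat.exists_eq_add_of_le hji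
  have hcn : c ^ n = algebraMap R K (a * ↑hb.unit⁻¹ * p ^ e) := by
    rw [← mul_left_inj' (hne j hb), ← h, ← map_mul]
    congr 1
    linear_combination (-(a * p ^ (j + e))) * hb.val_inv_mul
  obtain ⟨he, hc⟩ := exists_isUnit_algebraMap_eq_of_pow_eq hp (by omega : e < n)
    (ha.mul hb.unit⁻¹.isUnit) hcn
  exact ⟨by omega, hc⟩

end PrimePower

section Norm

theorem IsUnitIn.ne_zero {R L : Type*} [CommSemiring R] [Field L] [Algebra R L]
    {S : Subalgebra R L} {x : L} (hx : IsUnitIn S x) : x ≠ 0 :=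
  left_ne_zero_of_mul_eq_one hx.2.choose_spec.2

variable {R K L : Type*} [CommRing R] [IsIntegrallyClosed R] [Field K] [Algebra R K]
  [IsFractionRing R K] [Field L] [Algebra R L] [Algebra K L] [IsScalarTower R K L]
  {S : Subalgebra R L}

theorem IsUnitIn.exists_isUnit_algebraMap_eq_norm (hS : S ≤ integralClosure R L) {x : L}
    (hx : IsUnitIn S x) : ∃ r : R, IsUnit r ∧ algebraMap R K r = Algebra.norm K x := by
  have hnorm : ∀ z ∈ S, ∃ r : R, algebraMap R K r = Algebra.norm K z := fun z hz =>
    IsIntegrallyClosed.isIntegral_iff.mp (Algebra.isIntegral_norm K (hS hz))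
  obtain ⟨hxS, y, hyS, hxy⟩ := hx
  obtain ⟨r, hr⟩ := hnorm x hxS
  obtain ⟨s, hs⟩ := hnorm y hyS
  refine ⟨r, IsUnit.of_mul_eq_one s (IsFractionRing.injective R K ?_), hr⟩
  rw [map_mul, hr, hs, ← map_mul, hxy, map_one, map_one]

theorem eq_and_exists_isUnit_algebraMap_eq_of_norm_eq_prime [IsDomain R] [FiniteDimensional K L]
    (hS : S ≤ integralClosure R L) {p ε : R} (hp : Prime p) (hε : IsUnit ε) {x : L}
    (hx : Algebra.norm K x = algebraMap R K (ε * p)) {u v : L} (hu : IsUnitIn S u)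
    (hv : IsUnitIn S v) {i j : ℕ} (hi : i < finrank K L) (hj : j < finrank K L) {c : K}
    (h : x ^ i * u = algebraMap K L c * (x ^ j * v)) :
    i = j ∧ ∃ r : R, IsUnit r ∧ algebraMap R K r = c := by
  have hnorm : ∀ {w : L}, IsUnitIn S w → ∀ k : ℕ,
      ∃ a : R, IsUnit a ∧ Algebra.norm K (x ^ k * w) = algebraMap R K (a * p ^ k) := by
    intro w hw k
    obtain ⟨a, ha, hNa⟩ := hw.exists_isUnit_algebraMap_eq_norm (K := K) hS
    refine ⟨ε ^ k * a, (hε.pow k).mul ha, ?_⟩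
    rw [map_mul, map_pow, hx, ← hNa, ← map_pow, ← map_mul]
    ring_nf
  obtain ⟨a, ha, hNu⟩ := hnorm hu i
  obtain ⟨b, hb, hNv⟩ := hnorm hv j
  have hN := congrArg (Algebra.norm K) h
  rw [map_mul (Algebra.norm K) (algebraMap K L c), Algebra.norm_algebraMap, hNu, hNv] at hN
  exact eq_and_exists_isUnit_algebraMap_eq_of_mul_prime_pow_eq hp hi hj ha hb hN

end Norm

structure IsCarlitzModule {Fq : Type*} [Field Fq] [Fintype Fq] (φ : Fq[X] → Fq[X][X]) : Prop where
  one : φ 1 = X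
  add : ∀ a b, φ (a + b) = φ a + φ b
  smul : ∀ (β : Fq) (a : Fq[X]), φ (C β * a) = C (C β) * φ a
  mul : ∀ a b, φ (a * b) = (φ a).comp (φ b)
  X_eq : φ X = C X * X + X ^ Fintype.card Fq
  X_dvd : ∀ a, X ∣ φ a

namespace IsCarlitzModule

variable {Fq : Type*} [Field Fq] [Fintype Fq] {φ : Fq[X] → Fq[X][X]} (hφ : IsCarlitzModule φ)
include hφ

theorem zero : φ 0 = 0 :=
  (AddMonoidHom.mk' φ hφ.add).map_zero

theorem sub (a b : Fq[X]) : φ (a - b) = φ a - φ b :=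
  (AddMonoidHom.mk' φ hφ.add).map_sub a b

theorem coeff_zero (a : Fq[X]) : (φ a).coeff 0 = 0 :=
  X_dvd_iff.mp (hφ.X_dvd a)

noncomputable def coeffOneAlgHom : Fq[X] →ₐ[Fq] Fq[X] where
  toFun a := (φ a).coeff 1
  map_one' := by rw [hφ.one, coeff_X_one]
  map_mul' a b := by rw [hφ.mul, coeff_one_comp _ (hφ.coeff_zero b)]
  map_zero' := by rw [hφ.zero, Polynomial.coeff_zero]
  map_add' a b := by rw [hφ.add, coeff_add]
  commutes' β := by
    have h := hφ.smul β 1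
    rw [mul_one] at h
    simp [h, hφ.one]

theorem coeff_one (a : Fq[X]) : (φ a).coeff 1 = a := by
  have hq : 1 < Fintype.card Fq := Fintype.one_lt_card
  have h : hφ.coeffOneAlgHom = AlgHom.id Fq Fq[X] := by
    refine algHom_ext ?_
    change (φ X).coeff 1 = X
    rw [hφ.X_eq, coeff_add, coeff_C_mul_X, coeff_X_pow, if_neg hq.ne, add_zero, if_pos rfl]
  exact DFunLike.congr_fun h a

theorem monic_and_natDegree_X : (φ X).Monic ∧ (φ X).natDegree = Fintype.card Fq := by
  have hlt : (C X * X : Fq[X][X]).degree < Fintype.card Fq :=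
    (degree_C_mul_X_le _).trans_lt (by exact_mod_cast Fintype.one_lt_card)
  rw [hφ.X_eq, add_comm]
  exact ⟨monic_X_pow_add hlt,
    by rw [natDegree_add_eq_left_of_degree_lt (by simpa using hlt), natDegree_X_pow]⟩

theorem monic_and_natDegree_X_pow (n : ℕ) :
    (φ (X ^ n)).Monic ∧ (φ (X ^ n)).natDegree = Fintype.card Fq ^ n := by
  induction n with
  | zero => rw [pow_zero, pow_zero, hφ.one]; exact ⟨monic_X, natDegree_X⟩
  | succ n ih =>
    obtain ⟨hXmon, hXdeg⟩ := hφ.monic_and_natDegree_X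
    rw [pow_succ', hφ.mul, natDegree_comp, hXdeg, ih.2, pow_succ']
    exact ⟨hXmon.comp ih.1 (by rw [ih.2]; positivity), rfl⟩

theorem natDegree_eq_and_leadingCoeff_eq {a : Fq[X]} (ha : a ≠ 0) :
    (φ a).natDegree = Fintype.card Fq ^ a.natDegree ∧ (φ a).leadingCoeff = C a.leadingCoeff := by
  refine induction_with_natDegree_le (fun a => a ≠ 0 →
      (φ a).natDegree = Fintype.card Fq ^ a.natDegree ∧ (φ a).leadingCoeff = C a.leadingCoeff)
    a.natDegree (fun h => (h rfl).elim) ?_ ?_ a le_rfl ha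
  · intro n β hβ _ _
    obtain ⟨hmon, hdeg⟩ := hφ.monic_and_natDegree_X_pow n
    rw [hφ.smul, natDegree_C_mul (C_ne_zero.mpr hβ), hdeg, natDegree_C_mul_X_pow n β hβ,
      leadingCoeff_C_mul_X_pow, leadingCoeff_mul, leadingCoeff_C, hmon.leadingCoeff, mul_one]
    exact ⟨rfl, rfl⟩
  · intro f g hfg _ hf hg _
    obtain ⟨hgdeg, hglead⟩ := hg (by rintro rfl; simp at hfg)
    rcases eq_or_ne f 0 with rfl | hf0
    · rw [zero_add]; exact ⟨hgdeg, hglead⟩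
    have hlt : (φ f).natDegree < (φ g).natDegree := by
      rw [(hf hf0).1, hgdeg]; exact Nat.pow_lt_pow_right Fintype.one_lt_card hfg
    rw [hφ.add, natDegree_add_eq_right_of_natDegree_lt hlt,
      natDegree_add_eq_right_of_natDegree_lt hfg,
      leadingCoeff_add_of_degree_lt (degree_lt_degree hlt),
      leadingCoeff_add_of_degree_lt (degree_lt_degree hfg)]
    exact ⟨hgdeg, hglead⟩

theorem ne_zero {a : Fq[X]} (ha : a ≠ 0) : φ a ≠ 0 := by
  intro h
  have := (hφ.natDegree_eq_and_leadingCoeff_eq ha).2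
  rw [h, leadingCoeff_zero, eq_comm, C_eq_zero, leadingCoeff_eq_zero] at this
  exact ha this

section Cyclotomic

variable {p : Fq[X]} {Ψ : Fq[X][X]} (hΨ : X * Ψ = φ p)
include hΨ

theorem monic_of_X_mul_eq (hp : p.Monic) : Ψ.Monic := by
  have h := congrArg leadingCoeff hΨ
  rwa [leadingCoeff_mul, leadingCoeff_X, one_mul,
    (hφ.natDegree_eq_and_leadingCoeff_eq hp.ne_zero).2, hp.leadingCoeff, C_1] at h

theorem natDegree_of_X_mul_eq (hp : p ≠ 0) :
    Ψ.natDegree = Fintype.card Fq ^ p.natDegree - 1 := by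
  have hΨ0 : Ψ ≠ 0 := by rintro rfl; exact hφ.ne_zero hp (by rw [← hΨ, mul_zero])
  have h := congrArg natDegree hΨ
  rw [natDegree_mul X_ne_zero hΨ0, natDegree_X, (hφ.natDegree_eq_and_leadingCoeff_eq hp).1] at h
  omega

theorem coeff_zero_of_X_mul_eq : Ψ.coeff 0 = p := by
  rw [← coeff_X_mul, hΨ, hφ.coeff_one]

theorem norm_eq_of_X_mul_eq {K L : Type*} [Field K] [Field L] [Algebra Fq[X] K] [Algebra K L]
    [FiniteDimensional K L] {x : L} (hx : Algebra.adjoin K {x} = ⊤)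
    (hmin : minpoly K x = Ψ.map (algebraMap Fq[X] K)) :
    Algebra.norm K x = algebraMap Fq[X] K ((-1) ^ finrank K L * p) := by
  rw [Algebra.norm_eq_coeff_zero_minpoly_of_adjoin_eq_top hx, hmin, coeff_map,
    hφ.coeff_zero_of_X_mul_eq hΨ, map_mul, map_pow, map_neg, map_one]

end Cyclotomic

theorem aeval_eq_zero_of_dvd {L : Type*} [CommRing L] [Algebra Fq[X] L] {p a : Fq[X]} {x : L}
    (hpx : aeval x (φ p) = 0) (h : p ∣ a) : aeval x (φ a) = 0 := by
  obtain ⟨b, rfl⟩ := h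
  rw [mul_comm, hφ.mul, aeval_comp, hpx, ← coeff_zero_eq_aeval_zero', hφ.coeff_zero, map_zero]

variable {K L : Type*} [Field K] [Algebra Fq[X] K]

theorem aeval_eq_zero_iff_dvd [CommRing L] [Algebra K L] [Algebra Fq[X] L]
    [IsScalarTower Fq[X] K L] [FaithfulSMul Fq[X] K] {p : Fq[X]} (hp : p.Monic) {x : L}
    (hpx : aeval x (φ p) = 0)
    (hdeg : Fintype.card Fq ^ (p.natDegree - 1) < (minpoly K x).natDegree) (a : Fq[X]) :
    aeval x (φ a) = 0 ↔ p ∣ a := by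
  refine ⟨fun ha => ?_, hφ.aeval_eq_zero_of_dvd hpx⟩
  rw [← modByMonic_eq_zero_iff_dvd hp]
  by_contra hr
  have hφr : aeval x (φ (a %ₘ p)) = 0 := by
    rw [modByMonic_eq_sub_mul_div a p, hφ.sub, map_sub, ha,
      hφ.aeval_eq_zero_of_dvd hpx (dvd_mul_right p _), sub_zero]
  refine hφ.ne_zero hr (eq_zero_of_aeval_eq_zero_of_natDegree_lt hφr (lt_of_le_of_lt ?_ hdeg))
  rw [(hφ.natDegree_eq_and_leadingCoeff_eq hr).1]
  exact Nat.pow_le_pow_right Fintype.card_pos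
    (Nat.le_sub_one_of_lt (natDegree_lt_natDegree hr (degree_modByMonic_lt a hp)))

variable [Field L] [Algebra K L] [Algebra Fq[X] L] [IsScalarTower Fq[X] K L] {x : L}
  {p g : Fq[X]}

theorem pow_apply_eq {σ : L ≃ₐ[K] L} (hσ : σ x = aeval x (φ g)) (m : ℕ) :
    (σ ^ m) x = aeval x (φ (g ^ m)) := by
  induction m with
  | zero => rw [pow_zero, pow_zero, hφ.one, aeval_X, AlgEquiv.one_apply]
  | succ m ih =>
    rw [pow_succ', AlgEquiv.mul_apply, ih, ← aeval_algEquiv_apply, hσ, ← aeval_comp, ← hφ.mul,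
      pow_succ]

theorem orderOf_eq_orderOf_mk {σ : L ≃ₐ[K] L} (hσ : σ x = aeval x (φ g))
    (hx : Algebra.adjoin K {x} = ⊤) (hker : ∀ a, aeval x (φ a) = 0 ↔ p ∣ a) :
    orderOf σ = orderOf (Ideal.Quotient.mk (Ideal.span {p}) g) := by
  refine orderOf_eq_orderOf_iff.mpr fun m => ?_
  calc σ ^ m = 1 ↔ (σ ^ m) x = x :=
        ⟨fun h => by rw [h, AlgEquiv.one_apply], fun h => AlgEquiv.coe_toAlgHom_injective
          (AlgHom.ext_of_adjoin_eq_top hx (Set.eqOn_singleton.mpr h))⟩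
    _ ↔ aeval x (φ (g ^ m - 1)) = 0 := by
        rw [hφ.pow_apply_eq hσ, hφ.sub, hφ.one, map_sub, aeval_X, sub_eq_zero]
    _ ↔ p ∣ g ^ m - 1 := hker _
    _ ↔ Ideal.Quotient.mk (Ideal.span {p}) g ^ m = 1 := by
        rw [← Ideal.Quotient.eq_zero_iff_dvd, map_sub, map_pow, map_one, sub_eq_zero]

theorem exists_algEquiv_apply_eq_and_orderOf_eq [FiniteDimensional K L] (hp : Irreducible p)
    {Ψ : Fq[X][X]} (hΨ : X * Ψ = φ p) (hx : Algebra.adjoin K {x} = ⊤)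
    (hmin : minpoly K x = Ψ.map (algebraMap Fq[X] K)) (hker : ∀ a, aeval x (φ a) = 0 ↔ p ∣ a)
    (hg : ∀ u : (Fq[X] ⧸ Ideal.span {p})ˣ, ∃ n : ℕ, Ideal.Quotient.mk (Ideal.span {p}) g ^ n = u)
    (hcard : 2 < Fintype.card Fq ^ p.natDegree) :
    ∃ σ : L ≃ₐ[K] L, σ x = aeval x (φ g) ∧ orderOf σ = Fintype.card Fq ^ p.natDegree - 1 := by
  have : (Ideal.span {p}).IsMaximal := PrincipalIdealRing.isMaximal_of_irreducible hp
  let : Field (Fq[X] ⧸ Ideal.span {p}) := Ideal.Quotient.field _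
  have hcardQ : Nat.card (Fq[X] ⧸ Ideal.span {p}) = Fintype.card Fq ^ p.natDegree := by
    rw [natCard_quotient_span hp.ne_zero, Nat.card_eq_fintype_card]
  have : Finite (Fq[X] ⧸ Ideal.span {p}) := Nat.finite_of_card_ne_zero (by omega)
  have hg0 : ¬p ∣ g := by
    rw [← Ideal.Quotient.eq_zero_iff_dvd]
    exact ne_zero_of_forall_exists_pow_eq hg (by omega)
  have hy : aeval (aeval x (φ g)) (minpoly K x) = 0 := by
    have h : aeval (aeval x (φ g)) (X * Ψ) = 0 := by
      rw [hΨ, ← aeval_comp, ← hφ.mul, (hker _).mpr (dvd_mul_right p g)]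
    rw [map_mul, aeval_X] at h
    rw [hmin, aeval_map_algebraMap]
    exact (mul_eq_zero.mp h).resolve_left (mt (hker g).mp hg0)
  obtain ⟨σ, hσ⟩ := exists_algEquiv_apply_eq hx hy
  refine ⟨σ, hσ, ?_⟩
  rw [hφ.orderOf_eq_orderOf_mk hσ hx hker, ← hcardQ]
  exact orderOf_eq_card_sub_one_of_forall_exists_pow_eq hg (by omega)

end IsCarlitzModule

theorem stmt_2
    (Fq : Type) [Field Fq] [Fintype Fq]
    (L : Type) [Field L] [Algebra (Polynomial Fq) L] [Algebra (RatFunc Fq) L]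
    [IsScalarTower (Polynomial Fq) (RatFunc Fq) L] [FiniteDimensional (RatFunc Fq) L]
    (Carlitz : Polynomial Fq → Polynomial (Polynomial Fq))
    (hC1 : Carlitz 1 = Polynomial.X)
    (hCadd : ∀ a b, Carlitz (a + b) = Carlitz a + Carlitz b)
    (hCsmul : ∀ (β : Fq) (a : Polynomial Fq),
      Carlitz (Polynomial.C β * a) = Polynomial.C (Polynomial.C β) * Carlitz a)
    (hCmul : ∀ a b, Carlitz (a * b) = (Carlitz a).comp (Carlitz b))
    (hCT : Carlitz Polynomial.X
      = Polynomial.C Polynomial.X * Polynomial.X + Polynomial.X ^ Fintype.card Fq)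
    (hCdvd : ∀ a, Polynomial.X ∣ Carlitz a)
    (p : Polynomial Fq) (hpm : p.Monic) (hpi : Irreducible p)
    (d : ℕ) (hpd : p.natDegree = d) (hd1 : 1 ≤ d)
    (Ψ : Polynomial (Polynomial Fq)) (hΨdef : Polynomial.X * Ψ = Carlitz p)
    (hΨirr : Irreducible (Ψ.map (algebraMap (Polynomial Fq) (RatFunc Fq))))
    (lam : L) (hlam : Polynomial.aeval lam Ψ = 0)
    (hgen : IntermediateField.adjoin (RatFunc Fq) {lam} = ⊤)
    (g : Polynomial Fq)
    (hg : ∀ u : (Polynomial Fq ⧸ Ideal.span {p})ˣ, ∃ n : ℕ,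
      Ideal.Quotient.mk (Ideal.span {p}) g ^ n = (u : Polynomial Fq ⧸ Ideal.span {p}))
    (hqd : 2 < Fintype.card Fq ∨ 1 < d)
    (ℓ ℓs : ℕ) (hℓ : ℓ ≤ Fintype.card Fq ^ d - 2) (hℓs : ℓs ≤ Fintype.card Fq ^ d - 2)
    (Q Qs : Polynomial (Polynomial Fq))
    (hQdeg : Q.natDegree ≤ Fintype.card Fq ^ d - 2) (hQsdeg : Qs.natDegree ≤ Fintype.card Fq ^ d - 2)
    (hQu : IsUnitIn (Algebra.adjoin (Polynomial Fq) {lam}) (Polynomial.aeval lam Q))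
    (hQsu : IsUnitIn (Algebra.adjoin (Polynomial Fq) {lam}) (Polynomial.aeval lam Qs))
    (heq : (lam / Polynomial.aeval lam (Carlitz g)) ^ ℓ *
        (Polynomial.aeval lam Q / Polynomial.aeval (Polynomial.aeval lam (Carlitz g)) Q)
      = (lam / Polynomial.aeval lam (Carlitz g)) ^ ℓs *
        (Polynomial.aeval lam Qs / Polynomial.aeval (Polynomial.aeval lam (Carlitz g)) Qs)) :
    ℓ = ℓs ∧ ∃ υ : Fq, υ ≠ 0 ∧ Qs = Polynomial.C (Polynomial.C υ) * Q := by
  have hφ : IsCarlitzModule Carlitz := ⟨hC1, hCadd, hCsmul, hCmul, hCT, hCdvd⟩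
  have hΨmon : Ψ.Monic := hφ.monic_of_X_mul_eq hΨdef hpm
  have hmin : minpoly (RatFunc Fq) lam = Ψ.map (algebraMap _ _) :=
    (minpoly.eq_of_irreducible_of_monic hΨirr (by rwa [aeval_map_algebraMap]) (hΨmon.map _)).symm
  have hdeg : (minpoly (RatFunc Fq) lam).natDegree = Fintype.card Fq ^ d - 1 := by
    rw [hmin, natDegree_map_eq_of_injective (FaithfulSMul.algebraMap_injective _ _),
      hφ.natDegree_of_X_mul_eq hΨdef hpi.ne_zero, hpd]
  have hadj : Algebra.adjoin (RatFunc Fq) {lam} = ⊤ :=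
    Algebra.adjoin_eq_top_of_primitive_element (.of_finite _ _) hgen
  have hrank : finrank (RatFunc Fq) L = Fintype.card Fq ^ d - 1 :=
    (PowerBasis.ofAdjoinEqTop (.of_finite _ lam) hadj).finrank.trans hdeg
  have hpow_lt := Nat.pow_pred_lt_pow_sub_one Fintype.one_lt_card hd1 hqd
  have hker := hφ.aeval_eq_zero_iff_dvd hpm (by rw [← hΨdef, map_mul (aeval lam), hlam, mul_zero])
    (by rwa [hdeg, hpd])
  obtain ⟨σ, hσ, hσord⟩ := hφ.exists_algEquiv_apply_eq_and_orderOf_eq hpi hΨdef hadj hmin hker hg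
    (by rw [hpd]; have := Nat.one_le_pow (d - 1) _ (Fintype.card_pos (α := Fq)); omega)
  have hlam0 : lam ≠ 0 := fun h =>
    hpi.not_isUnit (isUnit_of_dvd_one ((hker 1).mp (by rw [hφ.one, aeval_X, h])))
  have hσ_pow_mul : ∀ (i : ℕ) (f : Fq[X][X]), σ (lam ^ i * aeval lam f)
      = aeval lam (Carlitz g) ^ i * aeval (aeval lam (Carlitz g)) f := fun i f => by
    rw [map_mul, map_pow, ← aeval_algEquiv_apply, hσ]
  obtain ⟨c, hc⟩ := exists_algebraMap_mul_eq_of_div_apply_eq (x := lam ^ ℓ * aeval lam Q)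
    (by rw [hσord, hrank, hpd]) (mul_ne_zero (pow_ne_zero ℓs hlam0) hQsu.ne_zero)
    (by rwa [hσ_pow_mul, hσ_pow_mul, mul_div_mul_comm, mul_div_mul_comm, ← div_pow, ← div_pow])
  obtain ⟨rfl, r, hr, rfl⟩ := eq_and_exists_isUnit_algebraMap_eq_of_norm_eq_prime
    (adjoin_le_integralClosure ⟨Ψ, hΨmon, by rwa [← aeval_def]⟩) hpi.prime
    (isUnit_neg_one.pow _) (hφ.norm_eq_of_X_mul_eq hΨdef hadj hmin) hQu hQsu
    (by omega) (by omega) hc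
  obtain ⟨γ, hγ, rfl⟩ := Polynomial.isUnit_iff.mp hr
  have hQ : Q = C (C γ) * Qs := eq_C_mul_of_aeval_eq (K := RatFunc Fq) (x := lam)
    (by omega) (by omega) (mul_left_cancel₀ (pow_ne_zero ℓ hlam0)
      (by rw [hc, IsScalarTower.algebraMap_apply Fq[X] (RatFunc Fq) L]; ring))
  refine ⟨rfl, γ⁻¹, inv_ne_zero hγ.ne_zero, ?_⟩
  rw [hQ, ← mul_assoc, ← C_mul, ← C_mul, inv_mul_cancel₀ hγ.ne_zero, C_1, C_1, one_mul]
end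

section
/- For every integer ℓ there exist an integer e with 0 ≤ e ≤ q^d − 2 and a polynomial Q ∈ A[X] such that Q(λ_℘) is a unit of O_℘ and (λ_℘/C_𝔤(λ_℘))^{ℓ} = (λ_℘/C_𝔤(λ_℘))^{e} · (Q(λ_℘)/Q(C_𝔤(λ_℘))). -/
open Polynomial Finset

theorem Finset.prod_range_succ_eq_of_eq {M : Type*} [CommMonoid M] {f : ℕ → M} {n : ℕ}
    (h : f n = f 0) : ∏ i ∈ range n, f (i + 1) = ∏ i ∈ range n, f i := by
  cases n with
  | zero => simp
  | succ n => rw [prod_range_succ, h, ← prod_range_succ']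

theorem ne_zero_of_forall_units_eq_pow {M₀ : Type*} [MonoidWithZero M₀] [Nontrivial M₀]
    [Nontrivial M₀ˣ] {a : M₀} (ha : ∀ u : M₀ˣ, ∃ n : ℕ, a ^ n = u) : a ≠ 0 := by
  rintro rfl
  obtain ⟨u, hu⟩ := exists_ne (1 : M₀ˣ)
  obtain ⟨_ | n, hn⟩ := ha u
  · exact hu (Units.ext (by simpa using hn.symm))
  · exact u.ne_zero (by simpa using hn.symm)

theorem pow_natCard_sub_one_eq_one_of_forall_units_eq_pow {F : Type*} [Field F] [Finite F]
    {a : F} (ha : ∀ u : Fˣ, ∃ n : ℕ, a ^ n = u) (hF : 3 ≤ Nat.card F) :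
    a ^ (Nat.card F - 1) = 1 := by
  have : Nontrivial Fˣ := by
    rw [← Finite.one_lt_card_iff_nontrivial, Nat.card_units]
    omega
  have := Fintype.ofFinite F
  rw [Nat.card_eq_fintype_card]
  exact FiniteField.pow_card_sub_one_eq_one a (ne_zero_of_forall_units_eq_pow ha)

theorem AdjoinRoot.natCard_eq_pow_natDegree {K : Type*} [Field K] {f : K[X]} (hf : f ≠ 0) :
    Nat.card (AdjoinRoot f) = Nat.card K ^ f.natDegree := by
  have := (AdjoinRoot.powerBasis hf).finite
  rw [Module.natCard_eq_pow_finrank (K := K), (AdjoinRoot.powerBasis hf).finrank,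
    AdjoinRoot.powerBasis_dim]

theorem Polynomial.mk_pow_card_pow_natDegree_sub_one_eq_one {K : Type*} [Field K] [Fintype K]
    {p g : K[X]} (hp : Irreducible p)
    (hg : ∀ u : (K[X] ⧸ Ideal.span {p})ˣ, ∃ n : ℕ,
      Ideal.Quotient.mk (Ideal.span {p}) g ^ n = (u : K[X] ⧸ Ideal.span {p}))
    (hcard : 3 ≤ Fintype.card K ^ p.natDegree) :
    Ideal.Quotient.mk (Ideal.span {p}) g ^ (Fintype.card K ^ p.natDegree - 1) = 1 := by
  have := Fact.mk hp
  have hcardQ : Nat.card (AdjoinRoot p) = Fintype.card K ^ p.natDegree := by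
    rw [AdjoinRoot.natCard_eq_pow_natDegree hp.ne_zero, Nat.card_eq_fintype_card]
  have := Nat.finite_of_card_ne_zero (hcardQ ▸ (by omega) : Nat.card (AdjoinRoot p) ≠ 0)
  rw [← hcardQ]
  exact pow_natCard_sub_one_eq_one_of_forall_units_eq_pow (F := AdjoinRoot p) hg (hcardQ ▸ hcard)

theorem Ideal.Quotient.exists_mk_mul_eq_one {R : Type*} [CommRing R] {I : Ideal R} {a : R}
    (ha : IsUnit (Ideal.Quotient.mk I a)) : ∃ b, Ideal.Quotient.mk I (b * a) = 1 := by
  obtain ⟨b, hb⟩ := Ideal.Quotient.mk_surjective ha.unit⁻¹.val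
  exact ⟨b, by rw [map_mul, hb, IsUnit.val_inv_mul]⟩

theorem Nat.three_le_pow {q d : ℕ} (hq : 2 ≤ q) (hd : 1 ≤ d) (hqd : 2 < q ∨ 1 < d) :
    3 ≤ q ^ d := by
  rcases hqd with hq3 | hd2
  · exact hq3.trans_le (Nat.le_self_pow (by omega) _)
  · calc 3 ≤ 2 ^ 2 := by norm_num
      _ ≤ q ^ d := (Nat.pow_le_pow_left hq 2).trans (Nat.pow_le_pow_right (by omega) hd2)

theorem Polynomial.mul_aeval_divX {R S : Type*} [CommSemiring R] [CommSemiring S] [Algebra R S]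
    {f : R[X]} (hf : X ∣ f) (x : S) : x * aeval x (divX f) = aeval x f := by
  conv_rhs => rw [← X_mul_divX_add f, X_dvd_iff.mp hf]
  simp

theorem isUnitIn_adjoin_aeval_of_mul_eq_one {R S : Type*} [CommRing R] [CommRing S] [Algebra R S]
    {x : S} {Q Q' : R[X]} (h : aeval x Q * aeval x Q' = 1) :
    IsUnitIn (Algebra.adjoin R {x}) (aeval x Q) := by
  have hmem : ∀ P : R[X], aeval x P ∈ Algebra.adjoin R {x} := fun P => by
    rw [Algebra.adjoin_singleton_eq_range_aeval]
    exact ⟨P, rfl⟩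
  exact ⟨hmem Q, aeval x Q', hmem Q', h⟩

theorem exists_isUnitIn_adjoin_aeval_div_aeval_eq_zpow {R S : Type*} [CommRing R] [Field S]
    [Algebra R S] {x y : S} {P V : R[X]} (hx : aeval x V * aeval x P = 1)
    (hy : aeval y V * aeval y P = 1) (m : ℤ) :
    ∃ Q : R[X], IsUnitIn (Algebra.adjoin R {x}) (aeval x Q) ∧
      aeval x Q / aeval y Q = (aeval x P / aeval y P) ^ m := by
  cases m with
  | ofNat k =>
    refine ⟨P ^ k, isUnitIn_adjoin_aeval_of_mul_eq_one (Q' := V ^ k) ?_, ?_⟩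
    · rw [map_pow, map_pow, ← mul_pow, mul_comm, hx, one_pow]
    · simp [div_pow]
  | negSucc k =>
    refine ⟨V ^ (k + 1), isUnitIn_adjoin_aeval_of_mul_eq_one (Q' := P ^ (k + 1)) ?_, ?_⟩
    · rw [map_pow, map_pow, ← mul_pow, hx, one_pow]
    · rw [zpow_negSucc, ← inv_pow, inv_div, map_pow, map_pow, ← div_pow,
        eq_inv_of_mul_eq_one_left hx, eq_inv_of_mul_eq_one_left hy, inv_div_inv]

structure IsCarlitzLike {A : Type*} [CommRing A] (C : A → A[X]) : Prop where
  apply_one : C 1 = X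
  apply_add : ∀ a b, C (a + b) = C a + C b
  apply_mul : ∀ a b, C (a * b) = (C a).comp (C b)
  X_dvd_apply : ∀ a, X ∣ C a

namespace IsCarlitzLike

variable {A L : Type*} [CommRing A] [Field L] [Algebra A L] {C : A → A[X]}

theorem aeval_mul (hC : IsCarlitzLike C) (x : L) (a b : A) :
    aeval x (C (a * b)) = aeval (aeval x (C b)) (C a) := by
  rw [hC.apply_mul, aeval_comp]

theorem aeval_zero (hC : IsCarlitzLike C) (a : A) : aeval (0 : L) (C a) = 0 := by
  simpa using (mul_aeval_divX (hC.X_dvd_apply a) (0 : L)).symm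

theorem aeval_eq_of_mk_eq (hC : IsCarlitzLike C) {p a b : A} {x : L} (hx : aeval x (C p) = 0)
    (hab : Ideal.Quotient.mk (Ideal.span {p}) a = Ideal.Quotient.mk (Ideal.span {p}) b) :
    aeval x (C a) = aeval x (C b) := by
  obtain ⟨c, hc⟩ := Ideal.mem_span_singleton'.mp (Ideal.Quotient.eq.mp hab)
  rw [show a = b + c * p by rw [hc]; ring, hC.apply_add, map_add, hC.aeval_mul, hx, hC.aeval_zero,
    add_zero]

theorem aeval_aeval_eq_zero (hC : IsCarlitzLike C) {p : A} {x : L} (hx : aeval x (C p) = 0)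
    (a : A) : aeval (aeval x (C a)) (C p) = 0 := by
  rw [← hC.aeval_mul, mul_comm, hC.aeval_mul, hx, hC.aeval_zero]

theorem aeval_mul_aeval_divX (hC : IsCarlitzLike C) {p a b : A} {x : L} (hx : aeval x (C p) = 0)
    (hba : Ideal.Quotient.mk (Ideal.span {p}) (b * a) = 1) :
    aeval x (C a) * aeval (aeval x (C a)) (divX (C b)) = x := by
  rw [mul_aeval_divX (hC.X_dvd_apply b), ← hC.aeval_mul,
    hC.aeval_eq_of_mk_eq hx (b := 1) (by rwa [map_one]), hC.apply_one, aeval_X]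

theorem aeval_ne_zero (hC : IsCarlitzLike C) {p a : A} {x : L} (hx : aeval x (C p) = 0)
    (hx0 : x ≠ 0) (ha : IsUnit (Ideal.Quotient.mk (Ideal.span {p}) a)) : aeval x (C a) ≠ 0 := by
  obtain ⟨b, hba⟩ := Ideal.Quotient.exists_mk_mul_eq_one ha
  intro h0
  exact hx0 (by simpa [h0] using (hC.aeval_mul_aeval_divX hx hba).symm)

theorem exists_aeval_mul_aeval_prod_divX_eq_one (hC : IsCarlitzLike C) {p : A} {ι : Type*}
    (s : Finset ι) {a : ι → A}
    (ha : ∀ i ∈ s, IsUnit (Ideal.Quotient.mk (Ideal.span {p}) (a i))) :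
    ∃ V : A[X], ∀ x : L, aeval x (C p) = 0 → x ≠ 0 →
      aeval x V * aeval x (∏ i ∈ s, divX (C (a i))) = 1 := by
  refine prod_induction _ (fun P => ∃ V : A[X], ∀ x : L, aeval x (C p) = 0 → x ≠ 0 →
      aeval x V * aeval x P = 1) ?_ ⟨1, by simp⟩ ?_
  · rintro P P' ⟨V, hV⟩ ⟨V', hV'⟩
    refine ⟨V * V', fun x hx hx0 => ?_⟩
    rw [map_mul, map_mul, mul_mul_mul_comm, hV x hx hx0, hV' x hx hx0, one_mul]
  · intro i hi
    obtain ⟨b, hba⟩ := Ideal.Quotient.exists_mk_mul_eq_one (ha i hi)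
    refine ⟨(divX (C b)).comp (C (a i)), fun x hx hx0 => mul_right_cancel₀ hx0 ?_⟩
    rw [aeval_comp, mul_assoc, mul_comm _ x, mul_aeval_divX (hC.X_dvd_apply _), one_mul, mul_comm,
      hC.aeval_mul_aeval_divX hx hba]

theorem aeval_prod_divX (hC : IsCarlitzLike C) {x : L} (hx0 : x ≠ 0) (g : A) (N : ℕ) :
    aeval x (∏ i ∈ range N, divX (C (g ^ i))) =
      (∏ i ∈ range N, aeval x (C (g ^ i))) / x ^ N := by
  rw [map_prod, eq_div_iff (pow_ne_zero _ hx0)]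
  calc _ = ∏ i ∈ range N, aeval x (divX (C (g ^ i))) * x := by
        rw [← prod_mul_pow_card, card_range]
    _ = _ := prod_congr rfl fun i _ => by rw [mul_comm, mul_aeval_divX (hC.X_dvd_apply _)]

theorem aeval_prod_divX_div_aeval_prod_divX (hC : IsCarlitzLike C) {p g : A} {x : L}
    (hx : aeval x (C p) = 0) (hx0 : x ≠ 0) (hg : IsUnit (Ideal.Quotient.mk (Ideal.span {p}) g))
    {N : ℕ} (hgN : Ideal.Quotient.mk (Ideal.span {p}) g ^ N = 1) :
    aeval x (∏ i ∈ range N, divX (C (g ^ i))) /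
        aeval (aeval x (C g)) (∏ i ∈ range N, divX (C (g ^ i))) =
      (aeval x (C g) / x) ^ N := by
  have hgx0 : aeval x (C g) ≠ 0 := hC.aeval_ne_zero hx hx0 hg
  have hprod0 : ∏ i ∈ range N, aeval x (C (g ^ i)) ≠ 0 :=
    prod_ne_zero_iff.mpr fun i _ => hC.aeval_ne_zero hx hx0 (by rw [map_pow]; exact hg.pow i)
  -- `i ↦ C_{g^i}(x)` is periodic with period `N`, so shifting it by one fixes the product
  have hshift : ∏ i ∈ range N, aeval (aeval x (C g)) (C (g ^ i)) =
      ∏ i ∈ range N, aeval x (C (g ^ i)) := by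
    simp_rw [← hC.aeval_mul, ← pow_succ]
    exact prod_range_succ_eq_of_eq (f := fun i => aeval x (C (g ^ i)))
      (hC.aeval_eq_of_mk_eq (a := g ^ N) (b := g ^ 0) hx (by simp [hgN]))
  rw [hC.aeval_prod_divX hx0, hC.aeval_prod_divX hgx0, hshift, div_pow]
  field_simp

end IsCarlitzLike

theorem stmt_11_general
    (Fq : Type) [Field Fq] [Fintype Fq]
    (L : Type) [Field L] [Algebra (Polynomial Fq) L]
    (Carlitz : Polynomial Fq → Polynomial (Polynomial Fq))
    (hC1 : Carlitz 1 = Polynomial.X)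
    (hCadd : ∀ a b, Carlitz (a + b) = Carlitz a + Carlitz b)
    (hCmul : ∀ a b, Carlitz (a * b) = (Carlitz a).comp (Carlitz b))
    (hCdvd : ∀ a, Polynomial.X ∣ Carlitz a)
    (p : Polynomial Fq) (hpi : Irreducible p)
    (d : ℕ) (hpd : p.natDegree = d) (hd1 : 1 ≤ d)
    (Ψ : Polynomial (Polynomial Fq)) (hΨdef : Polynomial.X * Ψ = Carlitz p)
    (lam : L) (hlam : Polynomial.aeval lam Ψ = 0)
    (g : Polynomial Fq)
    (hg : ∀ u : (Polynomial Fq ⧸ Ideal.span {p})ˣ, ∃ n : ℕ,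
      Ideal.Quotient.mk (Ideal.span {p}) g ^ n = (u : Polynomial Fq ⧸ Ideal.span {p}))
    (hqd : 2 < Fintype.card Fq ∨ 1 < d)
 :
    ∀ ℓ : ℤ, ∃ e : ℕ, e ≤ Fintype.card Fq ^ d - 2 ∧
      ∃ Q : Polynomial (Polynomial Fq), IsUnitIn (Algebra.adjoin (Polynomial Fq) {lam}) (Polynomial.aeval lam Q) ∧
        (lam / Polynomial.aeval lam (Carlitz g)) ^ ℓ = (lam / Polynomial.aeval lam (Carlitz g)) ^ (e : ℤ) *
          (Polynomial.aeval lam Q / Polynomial.aeval (Polynomial.aeval lam (Carlitz g)) Q) := by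
  intro ℓ
  have hcard : 3 ≤ Fintype.card Fq ^ d := Nat.three_le_pow Fintype.one_lt_card hd1 hqd
  have hgN : Ideal.Quotient.mk (Ideal.span {p}) g ^ (Fintype.card Fq ^ d - 1) = 1 := by
    rw [← hpd] at hcard ⊢
    exact mk_pow_card_pow_natDegree_sub_one_eq_one hpi hg hcard
  set N := Fintype.card Fq ^ d - 1
  have hgu := IsUnit.of_pow_eq_one hgN (by omega)
  have hC : IsCarlitzLike Carlitz := ⟨hC1, hCadd, hCmul, hCdvd⟩
  have hlamp : aeval lam (Carlitz p) = 0 := by rw [← hΨdef, map_mul, hlam, mul_zero]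
  by_cases hlam0 : lam = 0
  · refine ⟨if ℓ = 0 then 0 else 1, by split_ifs <;> omega, 1,
      isUnitIn_adjoin_aeval_of_mul_eq_one (Q' := 1) (by simp), ?_⟩
    split_ifs with hℓ <;> simp [hlam0, hℓ, zero_zpow]
  have hβ0 : aeval lam (Carlitz g) ≠ 0 := hC.aeval_ne_zero hlamp hlam0 hgu
  obtain ⟨V, hV⟩ := hC.exists_aeval_mul_aeval_prod_divX_eq_one (L := L) (range N)
    (a := (g ^ ·)) fun i _ => by rw [map_pow]; exact hgu.pow i
  obtain ⟨Q, hQ, hQratio⟩ := exists_isUnitIn_adjoin_aeval_div_aeval_eq_zpow (hV lam hlamp hlam0)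
    (hV _ (hC.aeval_aeval_eq_zero hlamp g) hβ0) (-(ℓ / N))
  have hℓN := Int.emod_lt_of_pos ℓ (by omega : (0 : ℤ) < N)
  refine ⟨(ℓ % N).toNat, by omega, Q, hQ, ?_⟩
  rw [hQratio, hC.aeval_prod_divX_div_aeval_prod_divX hlamp hlam0 hgu hgN,
    ← inv_div lam (aeval lam (Carlitz g)), inv_pow, inv_zpow', neg_neg, ← zpow_natCast,
    ← zpow_mul, ← zpow_add₀ (div_ne_zero hlam0 hβ0),
    Int.toNat_of_nonneg (Int.emod_nonneg _ (by omega)), Int.emod_add_mul_ediv]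

theorem stmt_11
    (Fq : Type) [Field Fq] [Fintype Fq]
    (L : Type) [Field L] [Algebra (Polynomial Fq) L] [Algebra (RatFunc Fq) L]
    [IsScalarTower (Polynomial Fq) (RatFunc Fq) L] [FiniteDimensional (RatFunc Fq) L]
    (Carlitz : Polynomial Fq → Polynomial (Polynomial Fq))
    (hC1 : Carlitz 1 = Polynomial.X)
    (hCadd : ∀ a b, Carlitz (a + b) = Carlitz a + Carlitz b)
    (hCsmul : ∀ (β : Fq) (a : Polynomial Fq),
      Carlitz (Polynomial.C β * a) = Polynomial.C (Polynomial.C β) * Carlitz a)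
    (hCmul : ∀ a b, Carlitz (a * b) = (Carlitz a).comp (Carlitz b))
    (hCT : Carlitz Polynomial.X
      = Polynomial.C Polynomial.X * Polynomial.X + Polynomial.X ^ Fintype.card Fq)
    (hCdvd : ∀ a, Polynomial.X ∣ Carlitz a)
    (p : Polynomial Fq) (hpm : p.Monic) (hpi : Irreducible p)
    (d : ℕ) (hpd : p.natDegree = d) (hd1 : 1 ≤ d)
    (Ψ : Polynomial (Polynomial Fq)) (hΨdef : Polynomial.X * Ψ = Carlitz p)
    (hΨirr : Irreducible (Ψ.map (algebraMap (Polynomial Fq) (RatFunc Fq))))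
    (lam : L) (hlam : Polynomial.aeval lam Ψ = 0)
    (hgen : IntermediateField.adjoin (RatFunc Fq) {lam} = ⊤)
    (g : Polynomial Fq)
    (hg : ∀ u : (Polynomial Fq ⧸ Ideal.span {p})ˣ, ∃ n : ℕ,
      Ideal.Quotient.mk (Ideal.span {p}) g ^ n = (u : Polynomial Fq ⧸ Ideal.span {p}))
    (hqd : 2 < Fintype.card Fq ∨ 1 < d)
 :
    ∀ ℓ : ℤ, ∃ e : ℕ, e ≤ Fintype.card Fq ^ d - 2 ∧
      ∃ Q : Polynomial (Polynomial Fq), IsUnitIn (Algebra.adjoin (Polynomial Fq) {lam}) (Polynomial.aeval lam Q) ∧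
        (lam / Polynomial.aeval lam (Carlitz g)) ^ ℓ = (lam / Polynomial.aeval lam (Carlitz g)) ^ (e : ℤ) *
          (Polynomial.aeval lam Q / Polynomial.aeval (Polynomial.aeval lam (Carlitz g)) Q) :=
  stmt_11_general Fq L Carlitz hC1 hCadd hCmul hCdvd p hpi d hpd hd1 Ψ hΨdef lam hlam g hg hqd
end

section
/- The automorphism σ_𝔤 generates the cyclic group Gal(𝕂_℘/k), which has order q^d − 1; more precisely, for every integer e with 0 ≤ e ≤ q^d − 2 one has σ_{𝔤^e}(λ_℘) = σ_𝔤^e(λ_℘), and every element of Gal(𝕂_℘/k) equals σ_𝔤^e for some such e. -/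
open Polynomial

section CarlitzPolynomial

variable {Fq : Type*} [Field Fq] {φ : Fq[X] → Fq[X][X]}

theorem carlitz_eq_sum (hCadd : ∀ a b, φ (a + b) = φ a + φ b)
    (hCsmul : ∀ (β : Fq) a, φ (C β * a) = C (C β) * φ a) (a : Fq[X]) :
    φ a = a.sum fun n c => C (C c) * φ (X ^ n) := by
  conv_lhs => rw [← a.sum_C_mul_X_pow_eq]
  rw [Polynomial.sum, ← AddMonoidHom.mk'_apply φ hCadd, map_sum]
  exact Finset.sum_congr rfl fun n _ => hCsmul _ _

variable [Fintype Fq]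

theorem carlitz_X_pow_succ (hCmul : ∀ a b, φ (a * b) = (φ a).comp (φ b))
    (hCT : φ X = C X * X + X ^ Fintype.card Fq) (i : ℕ) :
    φ (X ^ (i + 1)) = C X * φ (X ^ i) + φ (X ^ i) ^ Fintype.card Fq := by
  rw [pow_succ', hCmul, hCT]
  simp only [add_comp, mul_comp, C_comp, X_comp, pow_comp]

theorem coeff_one_carlitz_X_pow (hC1 : φ 1 = X) (hCmul : ∀ a b, φ (a * b) = (φ a).comp (φ b))
    (hCT : φ X = C X * X + X ^ Fintype.card Fq) (hCdvd : ∀ a, X ∣ φ a) (i : ℕ) :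
    (φ (X ^ i)).coeff 1 = X ^ i := by
  induction i with
  | zero => rw [pow_zero, hC1, coeff_X_one]
  | succ i ih =>
    obtain ⟨c, hc⟩ := hCdvd (X ^ i)
    have hq : ¬ Fintype.card Fq ≤ 1 := not_le.mpr Fintype.one_lt_card
    rw [carlitz_X_pow_succ hCmul hCT, coeff_add, coeff_C_mul, ih, hc, mul_pow, coeff_X_pow_mul',
      if_neg hq, add_zero, pow_succ']

theorem natDegree_carlitz_X_pow_le (hC1 : φ 1 = X) (hCmul : ∀ a b, φ (a * b) = (φ a).comp (φ b))
    (hCT : φ X = C X * X + X ^ Fintype.card Fq) (i : ℕ) :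
    (φ (X ^ i)).natDegree ≤ Fintype.card Fq ^ i := by
  induction i with
  | zero => simp [hC1]
  | succ i ih =>
    rw [carlitz_X_pow_succ hCmul hCT, pow_succ']
    refine (natDegree_add_le _ _).trans (max_le ?_ ?_)
    · exact (natDegree_C_mul_le _ _).trans (ih.trans (Nat.le_mul_of_pos_left _ Fintype.card_pos))
    · exact natDegree_pow_le.trans (Nat.mul_le_mul_left _ ih)

theorem coeff_one_carlitz (hC1 : φ 1 = X) (hCadd : ∀ a b, φ (a + b) = φ a + φ b)
    (hCsmul : ∀ (β : Fq) a, φ (C β * a) = C (C β) * φ a)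
    (hCmul : ∀ a b, φ (a * b) = (φ a).comp (φ b))
    (hCT : φ X = C X * X + X ^ Fintype.card Fq) (hCdvd : ∀ a, X ∣ φ a) (a : Fq[X]) :
    (φ a).coeff 1 = a := by
  conv_rhs => rw [← a.sum_C_mul_X_pow_eq]
  rw [carlitz_eq_sum hCadd hCsmul, Polynomial.sum, Polynomial.sum, finsetSum_coeff]
  simp only [coeff_C_mul, coeff_one_carlitz_X_pow hC1 hCmul hCT hCdvd]

theorem natDegree_carlitz_le (hC1 : φ 1 = X) (hCadd : ∀ a b, φ (a + b) = φ a + φ b)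
    (hCsmul : ∀ (β : Fq) a, φ (C β * a) = C (C β) * φ a)
    (hCmul : ∀ a b, φ (a * b) = (φ a).comp (φ b))
    (hCT : φ X = C X * X + X ^ Fintype.card Fq) (a : Fq[X]) :
    (φ a).natDegree ≤ Fintype.card Fq ^ a.natDegree := by
  rw [carlitz_eq_sum hCadd hCsmul]
  refine natDegree_sum_le_of_forall_le _ _ fun i hi => (natDegree_C_mul_le _ _).trans ?_
  exact (natDegree_carlitz_X_pow_le hC1 hCmul hCT i).trans
    (Nat.pow_le_pow_right Fintype.card_pos (le_natDegree_of_mem_supp _ hi))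

theorem coeff_zero_of_X_mul_eq_carlitz (hC1 : φ 1 = X)
    (hCadd : ∀ a b, φ (a + b) = φ a + φ b) (hCsmul : ∀ (β : Fq) a, φ (C β * a) = C (C β) * φ a)
    (hCmul : ∀ a b, φ (a * b) = (φ a).comp (φ b)) (hCT : φ X = C X * X + X ^ Fintype.card Fq)
    (hCdvd : ∀ a, X ∣ φ a) {p : Fq[X]} {Ψ : Fq[X][X]} (hΨ : X * Ψ = φ p) : Ψ.coeff 0 = p := by
  rw [← coeff_X_mul, hΨ, coeff_one_carlitz hC1 hCadd hCsmul hCmul hCT hCdvd]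

theorem natDegree_le_of_X_mul_eq_carlitz (hC1 : φ 1 = X)
    (hCadd : ∀ a b, φ (a + b) = φ a + φ b) (hCsmul : ∀ (β : Fq) a, φ (C β * a) = C (C β) * φ a)
    (hCmul : ∀ a b, φ (a * b) = (φ a).comp (φ b)) (hCT : φ X = C X * X + X ^ Fintype.card Fq)
    {p : Fq[X]} {Ψ : Fq[X][X]} (hΨ0 : Ψ ≠ 0) (hΨ : X * Ψ = φ p) :
    Ψ.natDegree ≤ Fintype.card Fq ^ p.natDegree - 1 := by
  have := natDegree_carlitz_le hC1 hCadd hCsmul hCmul hCT p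
  rw [← hΨ, natDegree_X_mul hΨ0] at this
  omega

end CarlitzPolynomial

section CarlitzTorsion

variable {Fq R : Type*} [Field Fq] [CommRing R] [Algebra Fq[X] R] {φ : Fq[X] → Fq[X][X]}

theorem aeval_carlitz_mul (hCmul : ∀ a b, φ (a * b) = (φ a).comp (φ b)) (x : R) (a b : Fq[X]) :
    aeval x (φ (a * b)) = aeval (aeval x (φ b)) (φ a) := by
  rw [hCmul, aeval_comp]

theorem aeval_zero_carlitz (hCdvd : ∀ a, X ∣ φ a) (a : Fq[X]) : aeval (0 : R) (φ a) = 0 := by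
  obtain ⟨c, hc⟩ := hCdvd a
  rw [hc, map_mul, aeval_X, zero_mul]

theorem dvd_of_aeval_carlitz_eq_zero (hC1 : φ 1 = X) (hCadd : ∀ a b, φ (a + b) = φ a + φ b)
    (hCmul : ∀ a b, φ (a * b) = (φ a).comp (φ b)) (hCdvd : ∀ a, X ∣ φ a)
    {p a : Fq[X]} (hp : Irreducible p) {x : R} (hx : x ≠ 0) (hpx : aeval x (φ p) = 0)
    (hax : aeval x (φ a) = 0) : p ∣ a := by
  by_contra hpa
  obtain ⟨u, v, huv⟩ := hp.coprime_iff_not_dvd.mpr hpa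
  apply hx
  calc x = aeval x (φ (u * p + v * a)) := by rw [huv, hC1, aeval_X]
    _ = 0 := by
      rw [hCadd, map_add, aeval_carlitz_mul hCmul, aeval_carlitz_mul hCmul, hpx, hax,
        aeval_zero_carlitz hCdvd u, aeval_zero_carlitz hCdvd v, add_zero]

theorem dvd_sub_of_aeval_carlitz_eq (hC1 : φ 1 = X) (hCadd : ∀ a b, φ (a + b) = φ a + φ b)
    (hCmul : ∀ a b, φ (a * b) = (φ a).comp (φ b)) (hCdvd : ∀ a, X ∣ φ a)
    {p a b : Fq[X]} (hp : Irreducible p) {x : R} (hx : x ≠ 0) (hpx : aeval x (φ p) = 0)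
    (hab : aeval x (φ a) = aeval x (φ b)) : p ∣ a - b := by
  refine dvd_of_aeval_carlitz_eq_zero hC1 hCadd hCmul hCdvd hp hx hpx ?_
  rw [← AddMonoidHom.mk'_apply φ hCadd, map_sub, AddMonoidHom.mk'_apply, map_sub, hab, sub_self]

end CarlitzTorsion

theorem algEquiv_pow_apply_eq_aeval_carlitz {A K L : Type*} [CommRing A] [CommRing K]
    [CommRing L] [Algebra A K] [Algebra K L] [Algebra A L] [IsScalarTower A K L]
    {φ : A → A[X]} (hC1 : φ 1 = X) (hCmul : ∀ a b, φ (a * b) = (φ a).comp (φ b))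
    {τ : L ≃ₐ[K] L} {x : L} {m : A} (hτ : τ x = aeval x (φ m)) (e : ℕ) :
    (τ ^ e) x = aeval x (φ (m ^ e)) := by
  induction e with
  | zero => rw [pow_zero, pow_zero, hC1, aeval_X, AlgEquiv.one_apply]
  | succ e ih =>
    rw [pow_succ, AlgEquiv.mul_apply, hτ, pow_succ', hCmul, aeval_comp, ← ih]
    exact (aeval_algHom_apply (((τ ^ e : L ≃ₐ[K] L) : L →ₐ[K] L).restrictScalars A) x (φ m)).symm

theorem mk_pow_eq_one_of_algEquiv_pow_eq_one {Fq K L : Type*} [Field Fq] [CommRing K]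
    [CommRing L] [Algebra Fq[X] K] [Algebra K L] [Algebra Fq[X] L] [IsScalarTower Fq[X] K L]
    {φ : Fq[X] → Fq[X][X]} (hC1 : φ 1 = X) (hCadd : ∀ a b, φ (a + b) = φ a + φ b)
    (hCmul : ∀ a b, φ (a * b) = (φ a).comp (φ b)) (hCdvd : ∀ a, X ∣ φ a)
    {p m : Fq[X]} (hp : Irreducible p) {x : L} (hx : x ≠ 0) (hpx : aeval x (φ p) = 0)
    {τ : L ≃ₐ[K] L} (hτ : τ x = aeval x (φ m)) {e : ℕ} (he : τ ^ e = 1) :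
    Ideal.Quotient.mk (Ideal.span {p}) m ^ e = 1 := by
  rw [← map_pow, ← sub_eq_zero, ← map_one (Ideal.Quotient.mk _), ← map_sub,
    Ideal.Quotient.eq_zero_iff_dvd]
  refine dvd_sub_of_aeval_carlitz_eq hC1 hCadd hCmul hCdvd hp hx hpx ?_
  rw [← algEquiv_pow_apply_eq_aeval_carlitz hC1 hCmul hτ, he, hC1, aeval_X, AlgEquiv.one_apply]

theorem card_algEquiv_le_natDegree {K L : Type*} [Field K] [Field L] [Algebra K L]
    [FiniteDimensional K L] {x : L} (hx : IntermediateField.adjoin K {x} = ⊤) {f : K[X]}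
    (hf : f ≠ 0) (hfx : aeval x f = 0) : Nat.card (L ≃ₐ[K] L) ≤ f.natDegree :=
  calc Nat.card (L ≃ₐ[K] L)
      ≤ Nat.card (L →ₐ[K] L) := Nat.card_le_card_of_injective _ AlgEquiv.coe_toAlgHom_injective
    _ ≤ Module.finrank K L := card_algHom_le_finrank K L L
    _ = (minpoly K x).natDegree := by
      rw [← IntermediateField.finrank_top', ← hx,
        IntermediateField.adjoin.finrank (IsIntegral.of_finite K x)]
    _ ≤ f.natDegree := natDegree_le_of_dvd (minpoly.dvd K x hfx) hf

theorem card_algEquiv_le_of_X_mul_eq_carlitz {Fq L : Type*} [Field Fq] [Fintype Fq] [Field L]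
    [Algebra Fq[X] L] [Algebra (RatFunc Fq) L] [IsScalarTower Fq[X] (RatFunc Fq) L]
    [FiniteDimensional (RatFunc Fq) L] {φ : Fq[X] → Fq[X][X]} (hC1 : φ 1 = X)
    (hCadd : ∀ a b, φ (a + b) = φ a + φ b) (hCsmul : ∀ (β : Fq) a, φ (C β * a) = C (C β) * φ a)
    (hCmul : ∀ a b, φ (a * b) = (φ a).comp (φ b)) (hCT : φ X = C X * X + X ^ Fintype.card Fq)
    (hCdvd : ∀ a, X ∣ φ a) {p : Fq[X]} (hp : p ≠ 0) {Ψ : Fq[X][X]} (hΨ : X * Ψ = φ p) {x : L}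
    (hx : aeval x Ψ = 0) (hgen : IntermediateField.adjoin (RatFunc Fq) {x} = ⊤) :
    Nat.card (L ≃ₐ[RatFunc Fq] L) ≤ Fintype.card Fq ^ p.natDegree - 1 := by
  have hΨ0 : Ψ ≠ 0 := fun h => hp (by
    rw [← coeff_zero_of_X_mul_eq_carlitz hC1 hCadd hCsmul hCmul hCT hCdvd hΨ, h, coeff_zero])
  refine (card_algEquiv_le_natDegree hgen
    ((Polynomial.map_ne_zero_iff (RatFunc.algebraMap_injective Fq)).mpr hΨ0)
    (by rw [aeval_map_algebraMap (RatFunc Fq), hx])).trans (natDegree_map_le.trans ?_)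
  exact natDegree_le_of_X_mul_eq_carlitz hC1 hCadd hCsmul hCmul hCT hΨ0 hΨ

theorem natCard_quotient_span_of_monic {R : Type*} [CommRing R] {f : R[X]} (hf : f.Monic) :
    Nat.card (R[X] ⧸ Ideal.span {f}) = Nat.card R ^ f.natDegree := by
  change Nat.card (AdjoinRoot f) = _
  rw [Nat.card_congr (AdjoinRoot.powerBasis' hf).basis.equivFun.toEquiv, Nat.card_fun,
    Nat.card_eq_fintype_card (α := Fin _), Fintype.card_fin]
  rfl

theorem isUnit_of_forall_units_eq_pow {M : Type*} [CommMonoid M] [Nontrivial Mˣ] {x : M}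
    (hx : ∀ u : Mˣ, ∃ n, x ^ n = u) : IsUnit x := by
  obtain ⟨u, hu⟩ := exists_ne (1 : Mˣ)
  obtain ⟨n, hn⟩ := hx u
  have hn0 : n ≠ 0 := by
    rintro rfl
    exact hu (Units.ext (by rw [← hn, pow_zero, Units.val_one]))
  exact isUnit_of_dvd_unit (dvd_pow_self x hn0) (hn ▸ u.isUnit)

theorem card_units_le_of_pow_eq_one {M : Type*} [Monoid M] {x : M}
    (hx : ∀ u : Mˣ, ∃ n, x ^ n = u) {e : ℕ} (he : e ≠ 0) (hxe : x ^ e = 1) :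
    Nat.card Mˣ ≤ e := by
  have hunit := IsUnit.of_pow_eq_one hxe he
  have hgen : ∀ u : Mˣ, u ∈ Submonoid.powers hunit.unit := fun u => by
    obtain ⟨n, hn⟩ := hx u
    exact ⟨n, Units.ext (by rw [Units.val_pow_eq_pow_val, hunit.unit_spec, hn])⟩
  rw [← orderOf_eq_card_of_forall_mem_powers hgen]
  exact orderOf_le_of_pow_eq_one (Nat.pos_of_ne_zero he)
    (Units.ext (by rw [Units.val_pow_eq_pow_val, hunit.unit_spec, hxe, Units.val_one]))

theorem exists_lt_card_pow_eq_of_orderOf_eq_card {G : Type*} [Group G] [Finite G] {x : G}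
    (hx : orderOf x = Nat.card G) (y : G) : ∃ e < Nat.card G, x ^ e = y := by
  classical
  have htop : Subgroup.zpowers x = ⊤ :=
    Subgroup.eq_top_of_card_eq _ (by rw [Nat.card_zpowers, hx])
  have hy : y ∈ Submonoid.powers x := mem_powers_iff_mem_zpowers.mpr (htop ▸ trivial)
  obtain ⟨e, he, rfl⟩ := Finset.mem_image.mp (mem_powers_iff_mem_range_orderOf.mp hy)
  exact ⟨e, hx ▸ Finset.mem_range.mp he, rfl⟩

theorem natCard_units_quotient_span {F : Type*} [Field F] {p : F[X]} (hm : p.Monic)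
    (hp : Irreducible p) : Nat.card (F[X] ⧸ Ideal.span {p})ˣ = Nat.card F ^ p.natDegree - 1 := by
  have : (Ideal.span {p}).IsMaximal := PrincipalIdealRing.isMaximal_of_irreducible hp
  let := Ideal.Quotient.field (Ideal.span {p})
  rw [Nat.card_units, natCard_quotient_span_of_monic hm]

theorem isCoprime_of_forall_units_eq_pow {R : Type*} [CommRing R] [IsPrincipalIdealRing R]
    [IsDomain R] {p g : R} (hp : Irreducible p)
    (hg : ∀ u : (R ⧸ Ideal.span {p})ˣ, ∃ n, Ideal.Quotient.mk (Ideal.span {p}) g ^ n = u)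
    (hcard : 1 < Nat.card (R ⧸ Ideal.span {p})ˣ) : IsCoprime g p := by
  have : Finite (R ⧸ Ideal.span {p})ˣ := Nat.finite_of_card_ne_zero (by omega)
  have : Nontrivial (R ⧸ Ideal.span {p})ˣ := Finite.one_lt_card_iff_nontrivial.mp hcard
  have : (Ideal.span {p}).IsMaximal := PrincipalIdealRing.isMaximal_of_irreducible hp
  refine isCoprime_comm.mp (hp.coprime_iff_not_dvd.mpr fun hpg => ?_)
  exact (isUnit_of_forall_units_eq_pow hg).ne_zero ((Ideal.Quotient.eq_zero_iff_dvd _ _).mpr hpg)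

theorem ne_zero_of_aeval_eq_zero {R S : Type*} [CommRing R] [CommRing S] [Algebra R S]
    (hinj : Function.Injective (algebraMap R S)) {f : R[X]} (hf : f.coeff 0 ≠ 0) {x : S}
    (hx : aeval x f = 0) : x ≠ 0 := by
  rintro rfl
  rw [aeval_def, eval₂_at_zero] at hx
  exact hf (hinj (hx.trans (map_zero _).symm))

theorem stmt_13_general
    (Fq : Type) [Field Fq] [Fintype Fq]
    (L : Type) [Field L] [Algebra (Polynomial Fq) L] [Algebra (RatFunc Fq) L]
    [IsScalarTower (Polynomial Fq) (RatFunc Fq) L] [FiniteDimensional (RatFunc Fq) L]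
    (Carlitz : Polynomial Fq → Polynomial (Polynomial Fq))
    (hC1 : Carlitz 1 = Polynomial.X)
    (hCadd : ∀ a b, Carlitz (a + b) = Carlitz a + Carlitz b)
    (hCsmul : ∀ (β : Fq) (a : Polynomial Fq),
      Carlitz (Polynomial.C β * a) = Polynomial.C (Polynomial.C β) * Carlitz a)
    (hCmul : ∀ a b, Carlitz (a * b) = (Carlitz a).comp (Carlitz b))
    (hCT : Carlitz Polynomial.X
      = Polynomial.C Polynomial.X * Polynomial.X + Polynomial.X ^ Fintype.card Fq)
    (hCdvd : ∀ a, Polynomial.X ∣ Carlitz a)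
    (p : Polynomial Fq) (hpm : p.Monic) (hpi : Irreducible p)
    (d : ℕ) (hpd : p.natDegree = d)
    (Ψ : Polynomial (Polynomial Fq)) (hΨdef : Polynomial.X * Ψ = Carlitz p)
    (lam : L) (hlam : Polynomial.aeval lam Ψ = 0)
    (hgen : IntermediateField.adjoin (RatFunc Fq) {lam} = ⊤)
    (g : Polynomial Fq)
    (hg : ∀ u : (Polynomial Fq ⧸ Ideal.span {p})ˣ, ∃ n : ℕ,
      Ideal.Quotient.mk (Ideal.span {p}) g ^ n = (u : Polynomial Fq ⧸ Ideal.span {p}))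
    (σ : Polynomial Fq → (L ≃ₐ[RatFunc Fq] L))
    (hσ : ∀ m : Polynomial Fq, IsCoprime m p → (σ m) lam = Polynomial.aeval lam (Carlitz m)) :
    Nat.card (L ≃ₐ[RatFunc Fq] L) = Fintype.card Fq ^ d - 1 ∧
    (∀ e : ℕ, e ≤ Fintype.card Fq ^ d - 2 → (σ (g ^ e)) lam = ((σ g) ^ e) lam) ∧
    (∀ τ : L ≃ₐ[RatFunc Fq] L, ∃ e : ℕ, e ≤ Fintype.card Fq ^ d - 2 ∧ τ = (σ g) ^ e) := by
  have hp0 := hpm.ne_zero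
  have hunits : Nat.card (Fq[X] ⧸ Ideal.span {p})ˣ = Fintype.card Fq ^ d - 1 := by
    rw [natCard_units_quotient_span hpm hpi, hpd, Nat.card_eq_fintype_card]
  -- when `q ^ d = 2` the unit group is trivial and `g` may be divisible by `p`
  have hcoprime (h : 2 ≤ Fintype.card Fq ^ d - 1) : IsCoprime g p :=
    isCoprime_of_forall_units_eq_pow hpi hg (by omega)
  have hcard_le : Nat.card (L ≃ₐ[RatFunc Fq] L) ≤ Fintype.card Fq ^ d - 1 :=
    hpd ▸ card_algEquiv_le_of_X_mul_eq_carlitz hC1 hCadd hCsmul hCmul hCT hCdvd hp0 hΨdef hlam hgen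
  have hinj : Function.Injective (algebraMap Fq[X] L) := by
    rw [IsScalarTower.algebraMap_eq Fq[X] (RatFunc Fq) L]
    exact (algebraMap _ L).injective.comp (RatFunc.algebraMap_injective Fq)
  have hlam0 : lam ≠ 0 := ne_zero_of_aeval_eq_zero hinj
    ((coeff_zero_of_X_mul_eq_carlitz hC1 hCadd hCsmul hCmul hCT hCdvd hΨdef).symm ▸ hp0) hlam
  have hlamp : aeval lam (Carlitz p) = 0 := by rw [← hΨdef, map_mul, hlam, mul_zero]
  have hle_of_pow_eq_one (e : ℕ) (he : e ≠ 0) (h : σ g ^ e = 1) :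
      Fintype.card Fq ^ d - 1 ≤ e := by
    by_contra! he'
    have hgp := hcoprime (by omega)
    have := card_units_le_of_pow_eq_one hg he (mk_pow_eq_one_of_algEquiv_pow_eq_one
      hC1 hCadd hCmul hCdvd hpi hlam0 hlamp (hσ g hgp) h)
    omega
  have horder : orderOf (σ g) = Fintype.card Fq ^ d - 1 :=
    le_antisymm (orderOf_le_card.trans hcard_le)
      (hle_of_pow_eq_one _ (orderOf_pos _).ne' (pow_orderOf_eq_one _))
  have hcard : Nat.card (L ≃ₐ[RatFunc Fq] L) = Fintype.card Fq ^ d - 1 :=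
    le_antisymm hcard_le (horder ▸ orderOf_le_card)
  refine ⟨hcard, fun e he => ?_, fun τ => ?_⟩
  · rcases Nat.eq_zero_or_pos e with rfl | he0
    · rw [pow_zero, pow_zero, hσ 1 isCoprime_one_left, hC1, aeval_X, AlgEquiv.one_apply]
    · have hgp := hcoprime (by omega)
      rw [hσ _ hgp.pow_left, algEquiv_pow_apply_eq_aeval_carlitz hC1 hCmul (hσ g hgp)]
  · obtain ⟨e, he, rfl⟩ := exists_lt_card_pow_eq_of_orderOf_eq_card (horder.trans hcard.symm) τ
    exact ⟨e, by omega, rfl⟩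

theorem stmt_13
    (Fq : Type) [Field Fq] [Fintype Fq]
    (L : Type) [Field L] [Algebra (Polynomial Fq) L] [Algebra (RatFunc Fq) L]
    [IsScalarTower (Polynomial Fq) (RatFunc Fq) L] [FiniteDimensional (RatFunc Fq) L]
    (Carlitz : Polynomial Fq → Polynomial (Polynomial Fq))
    (hC1 : Carlitz 1 = Polynomial.X)
    (hCadd : ∀ a b, Carlitz (a + b) = Carlitz a + Carlitz b)
    (hCsmul : ∀ (β : Fq) (a : Polynomial Fq),
      Carlitz (Polynomial.C β * a) = Polynomial.C (Polynomial.C β) * Carlitz a)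
    (hCmul : ∀ a b, Carlitz (a * b) = (Carlitz a).comp (Carlitz b))
    (hCT : Carlitz Polynomial.X
      = Polynomial.C Polynomial.X * Polynomial.X + Polynomial.X ^ Fintype.card Fq)
    (hCdvd : ∀ a, Polynomial.X ∣ Carlitz a)
    (p : Polynomial Fq) (hpm : p.Monic) (hpi : Irreducible p)
    (d : ℕ) (hpd : p.natDegree = d) (hd1 : 1 ≤ d)
    (Ψ : Polynomial (Polynomial Fq)) (hΨdef : Polynomial.X * Ψ = Carlitz p)
    (hΨirr : Irreducible (Ψ.map (algebraMap (Polynomial Fq) (RatFunc Fq))))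
    (lam : L) (hlam : Polynomial.aeval lam Ψ = 0)
    (hgen : IntermediateField.adjoin (RatFunc Fq) {lam} = ⊤)
    (g : Polynomial Fq)
    (hg : ∀ u : (Polynomial Fq ⧸ Ideal.span {p})ˣ, ∃ n : ℕ,
      Ideal.Quotient.mk (Ideal.span {p}) g ^ n = (u : Polynomial Fq ⧸ Ideal.span {p}))
    (σ : Polynomial Fq → (L ≃ₐ[RatFunc Fq] L))
    (hσ : ∀ m : Polynomial Fq, IsCoprime m p → (σ m) lam = Polynomial.aeval lam (Carlitz m)) :
    Nat.card (L ≃ₐ[RatFunc Fq] L) = Fintype.card Fq ^ d - 1 ∧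
    (∀ e : ℕ, e ≤ Fintype.card Fq ^ d - 2 → (σ (g ^ e)) lam = ((σ g) ^ e) lam) ∧
    (∀ τ : L ≃ₐ[RatFunc Fq] L, ∃ e : ℕ, e ≤ Fintype.card Fq ^ d - 2 ∧ τ = (σ g) ^ e) :=
  stmt_13_general Fq L Carlitz hC1 hCadd hCsmul hCmul hCT hCdvd p hpm hpi d hpd Ψ hΨdef lam hlam
    hgen g hg σ hσ
end
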